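/- Let X, Y_1, W_1, W_2 be jointly distributed finite random variables such that (W_1,W_2) ↔ X ↔ Y_1 is a Markov chain and also X ↔ (W_2, Y_1) ↔ W_1 is a Markov chain (equivalently I(X; W_1 | Y_1, W_2) = 0). Suppose there exists y_1 in the support of Y_1 with P(X = x, Y_1 = y_1) > 0 for every x with P(X = x) > 0. Then W_1 ↔ W_2 ↔ X is a Markov chain, i.e., P(w_1 | x, w_2) does not depend on x whenever P(x, w_2) > 0. -/
import Mathlib


open scoped BigOperators

namespace SIScalable

variable {Ω : Type*} [Fintype Ω]

/-- Probability that a finite random variable `X` takes value `a`, under pmf `μ`. -/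
noncomputable def pr (μ : Ω → ℝ) {A : Type*} [DecidableEq A] (X : Ω → A) (a : A) : ℝ :=
  ∑ ω, if X ω = a then μ ω else 0

/-- `μ` is a probability mass function. -/
def IsPMF (μ : Ω → ℝ) : Prop := (∀ ω, 0 ≤ μ ω) ∧ ∑ ω, μ ω = 1

/-- Shannon entropy (in bits) of a finite random variable. -/
noncomputable def ent (μ : Ω → ℝ) {A : Type*} [Fintype A] [DecidableEq A] (X : Ω → A) : ℝ :=
  -∑ a : A, pr μ X a * Real.logb 2 (pr μ X a)

/-- Conditional Shannon entropy `H(X|Y)`. -/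
noncomputable def condEnt (μ : Ω → ℝ) {A B : Type*} [Fintype A] [DecidableEq A]
    [Fintype B] [DecidableEq B] (X : Ω → A) (Y : Ω → B) : ℝ :=
  ent μ (fun ω => (X ω, Y ω)) - ent μ Y

/-- Conditional mutual information `I(X;Y|Z)`. -/
noncomputable def cmi (μ : Ω → ℝ) {A B C : Type*} [Fintype A] [DecidableEq A]
    [Fintype B] [DecidableEq B] [Fintype C] [DecidableEq C]
    (X : Ω → A) (Y : Ω → B) (Z : Ω → C) : ℝ :=
  ent μ (fun ω => (X ω, Z ω)) + ent μ (fun ω => (Y ω, Z ω))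
    - ent μ (fun ω => (X ω, Y ω, Z ω)) - ent μ Z
lemma pr_nonneg (μ : Ω → ℝ) (hμ0 : ∀ ω, 0 ≤ μ ω) {A : Type*} [DecidableEq A]
    (X : Ω → A) (a : A) : 0 ≤ pr μ X a := by
  apply Finset.sum_nonneg
  intro ω _
  split <;> simp [hμ0 ω]

lemma pr_congr (μ : Ω → ℝ) {A B : Type*} [DecidableEq A] [DecidableEq B]
    (X : Ω → A) (Y : Ω → B) (a : A) (b : B) (h : ∀ ω, X ω = a ↔ Y ω = b) :
    pr μ X a = pr μ Y b :=
  Finset.sum_congr rfl fun ω _ => by rw [if_congr (h ω) rfl rfl]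

lemma pr_pair_sum (μ : Ω → ℝ) {A B : Type*} [DecidableEq A] [Fintype B] [DecidableEq B]
    (f : Ω → A) (g : Ω → B) (a : A) :
    pr μ f a = ∑ b : B, pr μ (fun ω => (f ω, g ω)) (a, b) := by
  unfold pr
  rw [Finset.sum_comm]
  refine Finset.sum_congr rfl fun ω _ => ?_
  by_cases h : f ω = a <;> simp [h, Prod.ext_iff]

/-- If (W₁,W₂) ↔ X ↔ Y₁ is Markov, X ↔ (W₂,Y₁) ↔ W₁ is Markov,
and there is a letter y₁ with P(X = x, Y₁ = y₁) > 0 for every x in the support of X,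
then W₁ ↔ W₂ ↔ X is a Markov chain. -/
theorem support_condition_gives_markov
    {Ω 𝒳 𝒴₁ 𝒲₁ 𝒲₂ : Type*} [Fintype Ω]
    [Fintype 𝒳] [DecidableEq 𝒳] [Fintype 𝒴₁] [DecidableEq 𝒴₁]
    [Fintype 𝒲₁] [DecidableEq 𝒲₁] [Fintype 𝒲₂] [DecidableEq 𝒲₂]
    (μ : Ω → ℝ) (hμ : IsPMF μ)
    (X : Ω → 𝒳) (Y₁ : Ω → 𝒴₁) (W₁ : Ω → 𝒲₁) (W₂ : Ω → 𝒲₂)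
    -- (i) (W₁,W₂) ↔ X ↔ Y₁ : P(w₁,w₂,x,y₁)·P(x) = P(w₁,w₂,x)·P(x,y₁)
    (hMarkov : ∀ (w₁ : 𝒲₁) (w₂ : 𝒲₂) (x : 𝒳) (y₁ : 𝒴₁),
      pr μ (fun ω => (W₁ ω, W₂ ω, X ω, Y₁ ω)) (w₁, w₂, x, y₁) * pr μ X x
        = pr μ (fun ω => (W₁ ω, W₂ ω, X ω)) (w₁, w₂, x)
          * pr μ (fun ω => (X ω, Y₁ ω)) (x, y₁))
    -- (ii) X ↔ (W₂,Y₁) ↔ W₁ : P(w₁,w₂,x,y₁)·P(w₂,y₁) = P(x,w₂,y₁)·P(w₁,w₂,y₁)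
    (hCondIndep : ∀ (w₁ : 𝒲₁) (w₂ : 𝒲₂) (x : 𝒳) (y₁ : 𝒴₁),
      pr μ (fun ω => (W₁ ω, W₂ ω, X ω, Y₁ ω)) (w₁, w₂, x, y₁)
          * pr μ (fun ω => (W₂ ω, Y₁ ω)) (w₂, y₁)
        = pr μ (fun ω => (X ω, W₂ ω, Y₁ ω)) (x, w₂, y₁)
          * pr μ (fun ω => (W₁ ω, W₂ ω, Y₁ ω)) (w₁, w₂, y₁))
    -- (iii) support condition
    (hSupp : ∃ y₁ : 𝒴₁, ∀ x : 𝒳, 0 < pr μ X x →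
      0 < pr μ (fun ω => (X ω, Y₁ ω)) (x, y₁)) :
    -- Conclusion: W₁ ↔ W₂ ↔ X : P(w₁,w₂,x)·P(w₂) = P(w₁,w₂)·P(w₂,x)
    ∀ (w₁ : 𝒲₁) (w₂ : 𝒲₂) (x : 𝒳),
      pr μ (fun ω => (W₁ ω, W₂ ω, X ω)) (w₁, w₂, x) * pr μ W₂ w₂
        = pr μ (fun ω => (W₁ ω, W₂ ω)) (w₁, w₂)
          * pr μ (fun ω => (W₂ ω, X ω)) (w₂, x) := by
  obtain ⟨hμ0, -⟩ := hμ
  obtain ⟨y, hy⟩ := hSupp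
  intro w₁ w₂ x
  -- abbreviations
  set A : 𝒳 → ℝ := fun x' => pr μ (fun ω => (W₁ ω, W₂ ω, X ω)) (w₁, w₂, x') with hA
  set S : 𝒳 → ℝ := fun x' => pr μ (fun ω => (W₂ ω, X ω)) (w₂, x') with hS
  set T : 𝒳 → ℝ := fun x' => pr μ (fun ω => (X ω, W₂ ω, Y₁ ω)) (x', w₂, y) with hT
  set L : ℝ := pr μ (fun ω => (W₁ ω, W₂ ω, Y₁ ω)) (w₁, w₂, y) with hL
  set M : ℝ := pr μ (fun ω => (W₂ ω, Y₁ ω)) (w₂, y) with hM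
  -- marginalization facts
  have margS : ∀ x', S x' = ∑ w₁' : 𝒲₁,
      pr μ (fun ω => (W₁ ω, W₂ ω, X ω)) (w₁', w₂, x') := by
    intro x'
    show pr μ (fun ω => (W₂ ω, X ω)) (w₂, x') = _
    rw [pr_pair_sum μ (fun ω => (W₂ ω, X ω)) W₁ (w₂, x')]
    exact Finset.sum_congr rfl fun w₁' _ =>
      pr_congr μ _ _ _ _ (fun ω => by simp [Prod.ext_iff]; tauto)
  have hSle : ∀ x', S x' ≤ pr μ X x' := by
    intro x'
    have : pr μ X x' = ∑ w₂' : 𝒲₂, pr μ (fun ω => (W₂ ω, X ω)) (w₂', x') := by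
      rw [pr_pair_sum μ X W₂ x']
      exact Finset.sum_congr rfl fun w₂' _ =>
        pr_congr μ _ _ _ _ (fun ω => by simp [Prod.ext_iff]; tauto)
    rw [this]
    exact Finset.single_le_sum
      (f := fun w₂' => pr μ (fun ω => (W₂ ω, X ω)) (w₂', x'))
      (fun w₂' _ => pr_nonneg μ hμ0 _ _) (Finset.mem_univ w₂)
  have margT : ∀ x', T x' = ∑ w₁' : 𝒲₁,
      pr μ (fun ω => (W₁ ω, W₂ ω, X ω, Y₁ ω)) (w₁', w₂, x', y) := by
    intro x'
    show pr μ (fun ω => (X ω, W₂ ω, Y₁ ω)) (x', w₂, y) = _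
    rw [pr_pair_sum μ (fun ω => (X ω, W₂ ω, Y₁ ω)) W₁ (x', w₂, y)]
    exact Finset.sum_congr rfl fun w₁' _ =>
      pr_congr μ _ _ _ _ (fun ω => by simp [Prod.ext_iff]; tauto)
  have margM : M = ∑ x' : 𝒳, T x' := by
    show pr μ (fun ω => (W₂ ω, Y₁ ω)) (w₂, y) = _
    rw [pr_pair_sum μ (fun ω => (W₂ ω, Y₁ ω)) X (w₂, y)]
    exact Finset.sum_congr rfl fun x' _ =>
      pr_congr μ _ _ _ _ (fun ω => by simp [Prod.ext_iff]; tauto)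
  have hTleM : ∀ x', T x' ≤ M := by
    intro x'
    rw [margM]
    exact Finset.single_le_sum (f := T)
      (fun x'' _ => pr_nonneg μ hμ0 (fun ω => (X ω, W₂ ω, Y₁ ω)) (x'', w₂, y))
      (Finset.mem_univ x')
  have margW12 : pr μ (fun ω => (W₁ ω, W₂ ω)) (w₁, w₂) = ∑ x' : 𝒳, A x' := by
    rw [pr_pair_sum μ (fun ω => (W₁ ω, W₂ ω)) X (w₁, w₂)]
    exact Finset.sum_congr rfl fun x' _ =>
      pr_congr μ _ _ _ _ (fun ω => by simp [Prod.ext_iff]; tauto)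
  have margW2 : pr μ W₂ w₂ = ∑ x' : 𝒳, S x' := by
    rw [pr_pair_sum μ W₂ X w₂]
  -- summed Markov identity: T x' * P x' = S x' * q x'
  have hi' : ∀ x', T x' * pr μ X x'
      = S x' * pr μ (fun ω => (X ω, Y₁ ω)) (x', y) := by
    intro x'
    rw [margT, margS, Finset.sum_mul, Finset.sum_mul]
    exact Finset.sum_congr rfl fun w₁' _ => hMarkov w₁' w₂ x' y
  -- positivity of S implies positivity of T
  have hTpos : ∀ x', 0 < S x' → 0 < T x' := by
    intro x' hSpos
    have hPpos : 0 < pr μ X x' := lt_of_lt_of_le hSpos (hSle x')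
    have hqpos := hy x' hPpos
    have h1 : 0 < S x' * pr μ (fun ω => (X ω, Y₁ ω)) (x', y) := mul_pos hSpos hqpos
    rw [← hi' x'] at h1
    rcases mul_pos_iff.mp h1 with ⟨h, -⟩ | ⟨-, h⟩
    · exact h
    · linarith
  -- key pointwise identity
  have key : ∀ x', A x' * M = L * S x' := by
    intro x'
    by_cases hS0 : S x' = 0
    · have hA0 : A x' = 0 := by
        have h := (Finset.sum_eq_zero_iff_of_nonneg
          (fun w₁' _ => pr_nonneg μ hμ0 (fun ω => (W₁ ω, W₂ ω, X ω)) (w₁', w₂, x'))).mp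
          ((margS x').symm.trans hS0)
        exact h w₁ (Finset.mem_univ w₁)
      rw [hA0, hS0]; ring
    · have hSpos : 0 < S x' := lt_of_le_of_ne (pr_nonneg μ hμ0 _ _) (Ne.symm hS0)
      have hPpos : 0 < pr μ X x' := lt_of_lt_of_le hSpos (hSle x')
      have hqpos := hy x' hPpos
      have hi := hMarkov w₁ w₂ x' y
      have hii := hCondIndep w₁ w₂ x' y
      have hi'' := hi' x'
      -- A M q P = L S q P
      have hmain : A x' * M * (pr μ (fun ω => (X ω, Y₁ ω)) (x', y) * pr μ X x')
          = L * S x' * (pr μ (fun ω => (X ω, Y₁ ω)) (x', y) * pr μ X x') := by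
        linear_combination (-(M * pr μ X x')) * hi + (pr μ X x') ^ 2 * hii
          + (L * pr μ X x') * hi''
      exact mul_right_cancel₀ (ne_of_gt (mul_pos hqpos hPpos)) hmain
  -- summed identity
  have hsum : pr μ (fun ω => (W₁ ω, W₂ ω)) (w₁, w₂) * M = L * pr μ W₂ w₂ := by
    rw [margW12, margW2, Finset.sum_mul, Finset.mul_sum]
    exact Finset.sum_congr rfl fun x' _ => key x'
  by_cases hW2 : pr μ W₂ w₂ = 0
  · have hS0 : S x = 0 := by
      have h := (Finset.sum_eq_zero_iff_of_nonneg
        (fun x' _ => pr_nonneg μ hμ0 (fun ω => (W₂ ω, X ω)) (w₂, x'))).mp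
        (margW2.symm.trans hW2)
      exact h x (Finset.mem_univ x)
    have hA0 : A x = 0 := by
      have h := (Finset.sum_eq_zero_iff_of_nonneg
        (fun w₁' _ => pr_nonneg μ hμ0 (fun ω => (W₁ ω, W₂ ω, X ω)) (w₁', w₂, x))).mp
        ((margS x).symm.trans hS0)
      exact h w₁ (Finset.mem_univ w₁)
    show A x * pr μ W₂ w₂ = pr μ (fun ω => (W₁ ω, W₂ ω)) (w₁, w₂) * S x
    rw [hA0, hS0]; ring
  · have hW2pos : 0 < pr μ W₂ w₂ :=
      lt_of_le_of_ne (pr_nonneg μ hμ0 _ _) (Ne.symm hW2)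
    have hexS : ∃ x', 0 < S x' := by
      by_contra hcon
      push_neg at hcon
      have : pr μ W₂ w₂ ≤ 0 := by
        rw [margW2]
        exact Finset.sum_nonpos fun x' _ => hcon x'
      linarith
    obtain ⟨x'', hSpos''⟩ := hexS
    have hMpos : 0 < M := lt_of_lt_of_le (hTpos x'' hSpos'') (hTleM x'')
    have hmain : A x * pr μ W₂ w₂ * M
        = pr μ (fun ω => (W₁ ω, W₂ ω)) (w₁, w₂) * S x * M := by
      linear_combination (pr μ W₂ w₂) * key x - S x * hsum
    exact mul_right_cancel₀ (ne_of_gt hMpos) hmain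

end SIScalable
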